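/- arXiv:2409.05267 — 3 statements merged into one kernel-verified Lean document; each statement's English description precedes it below -/
import Mathlib

section
/- For each i ∈ {1,2,3}, the partial derivative ∂ᵢW of W(x) = √3(1+3|x|²)^(−1/2) satisfies (Δ + 5W⁴)(∂ᵢW) = 0 pointwise on ℝ³. -/
open MeasureTheory

/-- The ground state soliton `W(x) = √3 (1 + 3|x|²)^(-1/2)` on `ℝ³`. -/
noncomputable def W (x : Fin 3 → ℝ) : ℝ :=
  Real.sqrt 3 * (1 + 3 * ∑ i, x i ^ 2) ^ (-(1 : ℝ) / 2)

/-- The `i`-th partial derivative of a function on `ℝ³`. -/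
noncomputable def pderiv3 (i : Fin 3) (f : (Fin 3 → ℝ) → ℝ) (x : Fin 3 → ℝ) : ℝ :=
  fderiv ℝ f x (Pi.single i 1)

/-- The Euclidean Laplacian on `ℝ³`, `Δf = ∑ᵢ ∂ᵢ∂ᵢ f`. -/
noncomputable def laplacian3 (f : (Fin 3 → ℝ) → ℝ) (x : Fin 3 → ℝ) : ℝ :=
  ∑ i, pderiv3 i (pderiv3 i f) x

/-- `ΛW = (1/2)W + x·∇W`, the scaling derivative of the soliton. -/
noncomputable def LamW (x : Fin 3 → ℝ) : ℝ :=
  (1 / 2) * W x + ∑ i, x i * pderiv3 i W x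

/-!
`W` solves the Lane–Emden equation `ΔW = -W⁵`: with `q = 1 + 3|x|²` one finds
`∂ⱼ∂ⱼW = -3√3 (q^(-3/2) - 9 xⱼ² q^(-5/2))`, and summing over `j` with `q^(-3/2) = q · q^(-5/2)`
leaves `-9√3 q^(-5/2) = -W⁵`. Since `W` is smooth, partial derivatives commute, so `∂ᵢ`
commutes with `Δ` and differentiating the equation gives `Δ(∂ᵢW) = ∂ᵢ(-W⁵) = -5W⁴ ∂ᵢW`.
-/

open scoped ContDiff

section PartialDerivatives

variable {f g : (Fin 3 → ℝ) → ℝ} {x : Fin 3 → ℝ}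

lemma pderiv3_of_hasFDerivAt {f' : (Fin 3 → ℝ) →L[ℝ] ℝ} (h : HasFDerivAt f f' x) (j : Fin 3) :
    pderiv3 j f x = f' (Pi.single j 1) := by
  rw [pderiv3, h.fderiv]

lemma pderiv3_coord (i j : Fin 3) (x : Fin 3 → ℝ) :
    pderiv3 j (fun y => y i) x = Pi.single (M := fun _ => ℝ) j 1 i := by
  simp [pderiv3_of_hasFDerivAt (hasFDerivAt_apply i x)]

lemma pderiv3_neg (f : (Fin 3 → ℝ) → ℝ) (j : Fin 3) (x : Fin 3 → ℝ) :
    pderiv3 j (fun y => -f y) x = -pderiv3 j f x := by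
  simp [pderiv3]

lemma pderiv3_const_mul (hf : DifferentiableAt ℝ f x) (c : ℝ) (j : Fin 3) :
    pderiv3 j (fun y => c * f y) x = c * pderiv3 j f x := by
  simp [pderiv3, fderiv_const_mul hf]

lemma pderiv3_mul (hf : DifferentiableAt ℝ f x) (hg : DifferentiableAt ℝ g x) (j : Fin 3) :
    pderiv3 j (fun y => f y * g y) x = pderiv3 j f x * g x + f x * pderiv3 j g x := by
  simp only [pderiv3, fderiv_fun_mul hf hg, add_apply, smul_apply, smul_eq_mul]
  ring

lemma pderiv3_pow (hf : DifferentiableAt ℝ f x) (n : ℕ) (j : Fin 3) :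
    pderiv3 j (fun y => f y ^ n) x = n * f x ^ (n - 1) * pderiv3 j f x := by
  simp [pderiv3, fderiv_fun_pow n hf]

lemma pderiv3_rpow_const (hg : DifferentiableAt ℝ g x) (hx : g x ≠ 0) (c : ℝ) (j : Fin 3) :
    pderiv3 j (fun y => g y ^ c) x = c * g x ^ (c - 1) * pderiv3 j g x := by
  rw [pderiv3_of_hasFDerivAt (f := fun y => g y ^ c) (hg.hasFDerivAt.rpow_const (Or.inl hx)),
    pderiv3]
  simp

lemma pderiv3_pderiv3 (hf : DifferentiableAt ℝ (fderiv ℝ f) x) (i j : Fin 3) :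
    pderiv3 j (pderiv3 i f) x = fderiv ℝ (fderiv ℝ f) x (Pi.single j 1) (Pi.single i 1) := by
  change fderiv ℝ (fun y => fderiv ℝ f y (Pi.single i 1)) x (Pi.single j 1) = _
  simp [fderiv_clm_apply hf (differentiableAt_const _)]

lemma ContDiff.pderiv3 {n : ℕ∞ω} (hf : ContDiff ℝ (n + 1) f) (i : Fin 3) :
    ContDiff ℝ n (pderiv3 i f) :=
  (hf.fderiv_right le_rfl).clm_apply contDiff_const

lemma pderiv3_comm (hf : ContDiff ℝ 2 f) (i j : Fin 3) :
    pderiv3 j (pderiv3 i f) = pderiv3 i (pderiv3 j f) := by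
  have hf' : Differentiable ℝ (fderiv ℝ f) :=
    (hf.fderiv_right (m := 1) le_rfl).differentiable one_ne_zero
  ext x
  rw [pderiv3_pderiv3 (hf' x), pderiv3_pderiv3 (hf' x)]
  exact hf.contDiffAt.isSymmSndFDerivAt (by simp) _ _

lemma laplacian3_pderiv3 (hf : ContDiff ℝ 3 f) (i : Fin 3) :
    laplacian3 (pderiv3 i f) = pderiv3 i (laplacian3 f) := by
  ext x
  have hcomm (j : Fin 3) :
      pderiv3 j (pderiv3 j (pderiv3 i f)) = pderiv3 i (pderiv3 j (pderiv3 j f)) := by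
    rw [pderiv3_comm (hf.of_le (by norm_num)) i j, pderiv3_comm (hf.pderiv3 j) i j]
  have hdiff (j : Fin 3) : DifferentiableAt ℝ (pderiv3 j (pderiv3 j f)) x :=
    ((hf.pderiv3 j).pderiv3 j).differentiable one_ne_zero x
  simp only [laplacian3, hcomm]
  rw [pderiv3, show laplacian3 f = fun y => ∑ j, pderiv3 j (pderiv3 j f) y from rfl,
    fderiv_fun_sum fun j _ => hdiff j]
  simp [pderiv3]

end PartialDerivatives

noncomputable def solitonBase (x : Fin 3 → ℝ) : ℝ :=
  1 + 3 * ∑ i, x i ^ 2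

lemma solitonBase_pos (x : Fin 3 → ℝ) : 0 < solitonBase x := by
  unfold solitonBase
  positivity

@[fun_prop]
lemma contDiff_solitonBase {n : ℕ∞ω} : ContDiff ℝ n solitonBase := by
  unfold solitonBase
  fun_prop

@[fun_prop]
lemma differentiable_solitonBase : Differentiable ℝ solitonBase :=
  contDiff_solitonBase.differentiable one_ne_zero

lemma pderiv3_solitonBase (j : Fin 3) (x : Fin 3 → ℝ) : pderiv3 j solitonBase x = 6 * x j := by
  have h := ((HasFDerivAt.fun_sum (u := Finset.univ) fun i _ =>
    (ContinuousLinearMap.proj (R := ℝ) (φ := fun _ : Fin 3 => ℝ) i).hasFDerivAt (x := x)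
      |>.pow 2).const_mul (3 : ℝ)).const_add 1
  rw [pderiv3_of_hasFDerivAt (f := solitonBase) h]
  simp only [ContinuousLinearMap.proj_apply, Nat.add_one_sub_one, pow_one, nsmul_eq_mul,
    Nat.cast_ofNat, smul_apply, sum_apply, Pi.single_apply, smul_eq_mul, mul_ite, mul_one,
    mul_zero, Finset.sum_ite_eq', Finset.mem_univ, ↓reduceIte]
  ring

lemma pderiv3_solitonBase_rpow (c : ℝ) (j : Fin 3) (x : Fin 3 → ℝ) :
    pderiv3 j (fun y => solitonBase y ^ c) x = 6 * c * x j * solitonBase x ^ (c - 1) := by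
  rw [pderiv3_rpow_const (differentiable_solitonBase x) (solitonBase_pos x).ne',
    pderiv3_solitonBase]
  ring

lemma W_eq_solitonBase_rpow : W = fun x => √3 * solitonBase x ^ (-(1 : ℝ) / 2) := rfl

lemma contDiff_W {n : ℕ∞ω} : ContDiff ℝ n W :=
  contDiff_const.mul (contDiff_solitonBase.rpow_const_of_ne fun x => (solitonBase_pos x).ne')

lemma pderiv3_W (j : Fin 3) :
    pderiv3 j W = fun x => -3 * √3 * (x j * solitonBase x ^ (-(3 : ℝ) / 2)) := by
  ext x
  rw [W_eq_solitonBase_rpow,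
    pderiv3_const_mul (by fun_prop (disch := exact (solitonBase_pos _).ne')),
    pderiv3_solitonBase_rpow, show -(1 : ℝ) / 2 - 1 = -3 / 2 by norm_num]
  ring

lemma pderiv3_pderiv3_W (j : Fin 3) (x : Fin 3 → ℝ) :
    pderiv3 j (pderiv3 j W) x = -3 * √3 *
      (solitonBase x ^ (-(3 : ℝ) / 2) - 9 * x j ^ 2 * solitonBase x ^ (-(5 : ℝ) / 2)) := by
  rw [pderiv3_W, pderiv3_const_mul, pderiv3_mul, pderiv3_coord, pderiv3_solitonBase_rpow,
    show -(3 : ℝ) / 2 - 1 = -5 / 2 by norm_num]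
  · simp only [Pi.single_eq_same]
    ring
  all_goals fun_prop (disch := exact (solitonBase_pos _).ne')

lemma laplacian3_W : laplacian3 W = fun x => -W x ^ 5 := by
  ext x
  have hQ := solitonBase_pos x
  have h3 : solitonBase x ^ (-(3 : ℝ) / 2) = solitonBase x * solitonBase x ^ (-(5 : ℝ) / 2) := by
    rw [← Real.rpow_one_add' hQ.le (by norm_num)]
    norm_num
  have h5 : (solitonBase x ^ (-(1 : ℝ) / 2)) ^ 5 = solitonBase x ^ (-(5 : ℝ) / 2) := by
    rw [← Real.rpow_mul_natCast hQ.le]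
    norm_num
  have hsqrt : √3 ^ 5 = 9 * √3 := by
    rw [show 5 = 2 * 2 + 1 from rfl, pow_succ, pow_mul, Real.sq_sqrt (by norm_num)]
    norm_num
  simp only [laplacian3, pderiv3_pderiv3_W]
  simp only [W_eq_solitonBase_rpow, mul_pow, h3, h5, hsqrt]
  rw [solitonBase, Fin.sum_univ_three, Fin.sum_univ_three]
  ring

/-- `(Δ + 5W⁴)(∂ᵢW) = 0` pointwise on `ℝ³` for each `i`. -/
theorem pderivW_in_kernel_of_linearized_operator :
    ∀ (i : Fin 3) (x : Fin 3 → ℝ),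
      laplacian3 (pderiv3 i W) x + 5 * (W x) ^ 4 * pderiv3 i W x = 0 := by
  intro i x
  rw [laplacian3_pderiv3 contDiff_W i, laplacian3_W, pderiv3_neg,
    pderiv3_pow (contDiff_W.differentiable one_ne_zero x)]
  ring
end

section
/- The integral over all of ℝ³ of W³·(ΛW)³ equals 0. -/
open MeasureTheory

/-!
Both `W` and `ΛW` are functions of `s = |x|²`: `W² = 3 / (1 + 3s)` and, since
`x·∇(h(|x|²)) = 2 s h'(s)`, `ΛW = (1 - 3s) / (2(1 + 3s)) · W`. Hence
`W · ΛW = 3(1 - 3s) / (2(1 + 3s)²)`. In polar coordinates the integral is a multiple of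
`∫₀^∞ r² (W · ΛW)³ dr`, and this integrand has the explicit rational primitive
`(45r³ - 54r⁵ + 405r⁷) / (40(1 + 3r²)⁵)`, which vanishes at `0` and at `∞`.
-/

open Real Filter Set Topology

theorem integral_comp_sum_sq {ι F : Type*} [Fintype ι] [Nonempty ι] [NormedAddCommGroup F]
    [NormedSpace ℝ F] (g : ℝ → F) :
    ∫ x : ι → ℝ, g (∑ i, x i ^ 2) =
      Fintype.card ι • volume.real (Metric.ball (0 : EuclideanSpace ℝ ι) 1) •
        ∫ r in Ioi (0 : ℝ), r ^ (Fintype.card ι - 1) • g (r ^ 2) := by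
  rw [← (EuclideanSpace.volume_preserving_symm_measurableEquiv_toLp ι).integral_comp'
    (fun x => g (∑ i, x i ^ 2)), ← finrank_euclideanSpace (𝕜 := ℝ),
    ← integral_fun_norm_addHaar volume (fun r => g (r ^ 2))]
  simp [EuclideanSpace.norm_sq_eq]

theorem hasFDerivAt_sum_sq {ι : Type*} [Fintype ι] (x : ι → ℝ) :
    HasFDerivAt (fun y : ι → ℝ => ∑ i, y i ^ 2)
      (∑ i, (2 * x i) • ContinuousLinearMap.proj (R := ℝ) (φ := fun _ : ι => ℝ) i) x := by
  refine HasFDerivAt.fun_sum fun i _ => ?_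
  simpa [mul_comm] using
    ((ContinuousLinearMap.proj (R := ℝ) (φ := fun _ : ι => ℝ) i).hasFDerivAt (x := x)).pow 2

theorem pderiv3_comp_sum_sq {h : ℝ → ℝ} {h' : ℝ} {x : Fin 3 → ℝ}
    (hh : HasDerivAt h h' (∑ i, x i ^ 2)) (i : Fin 3) :
    pderiv3 i (fun y => h (∑ j, y j ^ 2)) x = 2 * x i * h' := by
  have hd : HasFDerivAt (fun y => h (∑ j, y j ^ 2)) _ x :=
    hh.comp_hasFDerivAt x (hasFDerivAt_sum_sq x)
  rw [pderiv3, hd.fderiv]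
  simp only [smul_apply, sum_apply, ContinuousLinearMap.proj_apply, Pi.single_apply,
    smul_eq_mul, mul_ite, mul_one, mul_zero, Finset.sum_ite_eq', Finset.mem_univ, ↓reduceIte]
  ring

theorem sum_mul_pderiv3_comp_sum_sq {h : ℝ → ℝ} {h' : ℝ} {x : Fin 3 → ℝ}
    (hh : HasDerivAt h h' (∑ i, x i ^ 2)) :
    ∑ i, x i * pderiv3 i (fun y => h (∑ j, y j ^ 2)) x = 2 * (∑ i, x i ^ 2) * h' := by
  rw [Finset.mul_sum, Finset.sum_mul]
  exact Finset.sum_congr rfl fun i _ => by rw [pderiv3_comp_sum_sq hh]; ring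

noncomputable def WProfile (t : ℝ) : ℝ := √3 * (1 + 3 * t) ^ (-(1 : ℝ) / 2)

theorem W_eq_WProfile : W = fun x => WProfile (∑ i, x i ^ 2) := rfl

theorem hasDerivAt_WProfile {t : ℝ} (ht : 0 < 1 + 3 * t) :
    HasDerivAt WProfile (-(3 / 2) * WProfile t / (1 + 3 * t)) t := by
  have hq : HasDerivAt (fun t : ℝ => 1 + 3 * t) 3 t := by
    simpa using ((hasDerivAt_id t).const_mul 3).const_add 1
  refine ((hq.rpow_const (p := -(1 : ℝ) / 2) (Or.inl ht.ne')).const_mul √3).congr_deriv ?_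
  rw [WProfile, rpow_sub_one ht.ne']
  ring

theorem one_add_three_mul_sum_sq_pos (x : Fin 3 → ℝ) : 0 < 1 + 3 * ∑ i, x i ^ 2 := by
  have : 0 ≤ ∑ i, x i ^ 2 := Finset.sum_nonneg fun _ _ => sq_nonneg _
  linarith

theorem W_sq (x : Fin 3 → ℝ) : W x ^ 2 = 3 / (1 + 3 * ∑ i, x i ^ 2) := by
  rw [W, mul_pow, sq_sqrt (by norm_num), ← rpow_natCast,
    ← rpow_mul (one_add_three_mul_sum_sq_pos x).le]
  norm_num [rpow_neg_one, div_eq_mul_inv]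

theorem LamW_eq (x : Fin 3 → ℝ) :
    LamW x = (1 - 3 * ∑ i, x i ^ 2) / (2 * (1 + 3 * ∑ i, x i ^ 2)) * W x := by
  have hq := one_add_three_mul_sum_sq_pos x
  rw [LamW, W_eq_WProfile, sum_mul_pderiv3_comp_sum_sq (hasDerivAt_WProfile hq)]
  field_simp
  ring

noncomputable def WLamWProfile (t : ℝ) : ℝ := 3 * (1 - 3 * t) / (2 * (1 + 3 * t) ^ 2)

theorem W_mul_LamW (x : Fin 3 → ℝ) : W x * LamW x = WLamWProfile (∑ i, x i ^ 2) := by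
  have hq := one_add_three_mul_sum_sq_pos x
  rw [LamW_eq, mul_left_comm, ← sq, W_sq, WLamWProfile]
  field_simp

noncomputable def radialPrimitive (r : ℝ) : ℝ :=
  (45 * r ^ 3 - 54 * r ^ 5 + 405 * r ^ 7) / (40 * (1 + 3 * r ^ 2) ^ 5)

theorem hasDerivAt_radialPrimitive (r : ℝ) :
    HasDerivAt radialPrimitive (r ^ 2 * WLamWProfile (r ^ 2) ^ 3) r := by
  have hnum : HasDerivAt (fun r : ℝ => 45 * r ^ 3 - 54 * r ^ 5 + 405 * r ^ 7)
      (135 * r ^ 2 - 270 * r ^ 4 + 2835 * r ^ 6) r := by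
    refine ((((hasDerivAt_pow 3 r).const_mul 45).sub ((hasDerivAt_pow 5 r).const_mul 54)).add
      ((hasDerivAt_pow 7 r).const_mul 405)).congr_deriv ?_
    push_cast; ring
  have hden : HasDerivAt (fun r : ℝ => 40 * (1 + 3 * r ^ 2) ^ 5)
      (1200 * r * (1 + 3 * r ^ 2) ^ 4) r := by
    refine (((((hasDerivAt_pow 2 r).const_mul 3).const_add 1).pow 5).const_mul 40).congr_deriv ?_
    push_cast; ring
  have hq : 1 + 3 * r ^ 2 ≠ 0 := by positivity
  refine (hnum.div hden (by positivity)).congr_deriv ?_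
  rw [WLamWProfile]
  field_simp
  ring

theorem tendsto_radialPrimitive_atTop : Tendsto radialPrimitive atTop (𝓝 0) := by
  let G : ℝ → ℝ := fun t => (45 * t ^ 7 - 54 * t ^ 5 + 405 * t ^ 3) / (40 * (t ^ 2 + 3) ^ 5)
  have hG : Continuous G := Continuous.div (by fun_prop) (by fun_prop) fun t => by positivity
  have hlim := (hG.tendsto 0).comp tendsto_inv_atTop_zero
  rw [show G 0 = 0 by simp [G]] at hlim
  refine hlim.congr' ?_
  filter_upwards [Ioi_mem_atTop 0] with r (hr : 0 < r)
  simp only [Function.comp_apply, G, radialPrimitive]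
  field_simp

theorem abs_WLamWProfile_le {t : ℝ} (ht : 0 ≤ t) :
    |WLamWProfile t| ≤ 3 / (2 * (1 + 3 * t)) := by
  have hq : 0 < 1 + 3 * t := by linarith
  rw [WLamWProfile, abs_div, abs_of_pos (by positivity : (0 : ℝ) < 2 * (1 + 3 * t) ^ 2),
    div_le_div_iff₀ (by positivity) (by positivity), abs_mul, abs_of_pos three_pos]
  have : |1 - 3 * t| ≤ 1 + 3 * t := abs_le.2 ⟨by linarith, by linarith⟩
  nlinarith [abs_nonneg (1 - 3 * t)]

theorem integrableOn_sq_mul_WLamWProfile_pow_three :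
    IntegrableOn (fun r : ℝ => r ^ 2 * WLamWProfile (r ^ 2) ^ 3) (Ioi 0) := by
  refine ((integrable_inv_one_add_sq.const_mul (27 / 8)).restrict).mono' ?_ ?_
  · have : Continuous fun r : ℝ => WLamWProfile (r ^ 2) :=
      Continuous.div (by fun_prop) (by fun_prop) fun r => by positivity
    exact (by fun_prop : Continuous fun r : ℝ => r ^ 2 * WLamWProfile (r ^ 2) ^ 3)
      |>.aestronglyMeasurable
  · refine Eventually.of_forall fun r => ?_
    have hq : 0 < 1 + 3 * r ^ 2 := by positivity
    have hp := abs_WLamWProfile_le (sq_nonneg r)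
    calc ‖r ^ 2 * WLamWProfile (r ^ 2) ^ 3‖ = r ^ 2 * |WLamWProfile (r ^ 2)| ^ 3 := by
          rw [norm_mul, norm_pow, norm_pow, Real.norm_eq_abs, Real.norm_eq_abs, sq_abs]
      _ ≤ r ^ 2 * (3 / (2 * (1 + 3 * r ^ 2))) ^ 3 := by gcongr
      _ ≤ 27 / 8 * (1 + r ^ 2)⁻¹ := by
          rw [div_pow, ← div_eq_mul_inv, mul_div_assoc',
            div_le_div_iff₀ (by positivity) (by positivity)]
          nlinarith [sq_nonneg r, pow_nonneg (sq_nonneg r) 3, pow_nonneg (sq_nonneg r) 2]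

theorem integral_sq_mul_WLamWProfile_pow_three_eq_zero :
    ∫ r in Ioi (0 : ℝ), r ^ 2 * WLamWProfile (r ^ 2) ^ 3 = 0 := by
  rw [integral_Ioi_of_hasDerivAt_of_tendsto' (fun r _ => hasDerivAt_radialPrimitive r)
    integrableOn_sq_mul_WLamWProfile_pow_three tendsto_radialPrimitive_atTop]
  simp [radialPrimitive]

/-- `∫_{ℝ³} W³ (ΛW)³ = 0`. -/
theorem integral_W3_LamW3_eq_zero :
    ∫ x : Fin 3 → ℝ, (W x) ^ 3 * (LamW x) ^ 3 = 0 := by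
  simp_rw [← mul_pow, W_mul_LamW]
  rw [integral_comp_sum_sq (fun t => WLamWProfile t ^ 3)]
  simp [integral_sq_mul_WLamWProfile_pow_three_eq_zero]
end

section
/- The polynomial p(y) = y⁴ − 2y² − 16y + 1 has exactly two real roots, one in the interval (0, 0.1) and one in the interval (2.7, 2.8). -/
/-- `p(y) = y⁴ − 2y² − 16y + 1` has exactly two real roots, one in
`(0, 0.1)` and one in `(2.7, 2.8)`. -/
theorem quartic_two_real_roots :
    ∃ a b : ℝ, a ∈ Set.Ioo (0 : ℝ) 0.1 ∧ b ∈ Set.Ioo (2.7 : ℝ) 2.8 ∧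
      a ^ 4 - 2 * a ^ 2 - 16 * a + 1 = 0 ∧
      b ^ 4 - 2 * b ^ 2 - 16 * b + 1 = 0 ∧
      ∀ y : ℝ, y ^ 4 - 2 * y ^ 2 - 16 * y + 1 = 0 → y = a ∨ y = b := by
  set s := Real.sqrt 2 with hs_def
  have hs : s ^ 2 = 2 := Real.sq_sqrt (by norm_num)
  have hs_nonneg : 0 ≤ s := Real.sqrt_nonneg 2
  have hs_lb : (1.414 : ℝ) < s := by nlinarith
  have hs_ub : s < 1.4143 := by nlinarith
  set t := Real.sqrt (2 * s - 1) with ht_def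
  have ht : t ^ 2 = 2 * s - 1 := Real.sq_sqrt (by nlinarith)
  have ht_nonneg : 0 ≤ t := Real.sqrt_nonneg _
  have ht_lb : (1.352 : ℝ) < t := by nlinarith
  have ht_ub : t < 1.3523 := by nlinarith
  have hfact : ∀ y : ℝ, y ^ 4 - 2 * y ^ 2 - 16 * y + 1 =
      (y ^ 2 + 2 * s * y + (3 + 2 * s)) * (y ^ 2 - 2 * s * y + (3 - 2 * s)) := by
    intro y
    linear_combination 4 * (y + 1) ^ 2 * hs
  have hF2a : (s - t) ^ 2 - 2 * s * (s - t) + (3 - 2 * s) = 0 := by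
    linear_combination ht - hs
  have hF2b : (s + t) ^ 2 - 2 * s * (s + t) + (3 - 2 * s) = 0 := by
    linear_combination ht - hs
  refine ⟨s - t, s + t, ⟨by linarith, by linarith⟩, ⟨by linarith, by linarith⟩,
    ?_, ?_, ?_⟩
  · linear_combination hfact (s - t) +
      ((s - t) ^ 2 + 2 * s * (s - t) + (3 + 2 * s)) * hF2a
  · linear_combination hfact (s + t) +
      ((s + t) ^ 2 + 2 * s * (s + t) + (3 + 2 * s)) * hF2b
  · intro y hy
    have key : (y ^ 2 + 2 * s * y + (3 + 2 * s)) * (y ^ 2 - 2 * s * y + (3 - 2 * s)) = 0 :=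
      (hfact y).symm.trans hy
    have hpos : 0 < y ^ 2 + 2 * s * y + (3 + 2 * s) := by
      nlinarith [sq_nonneg (y + s)]
    have h2 : y ^ 2 - 2 * s * y + (3 - 2 * s) = 0 := by
      rcases mul_eq_zero.mp key with h | h
      · exact absurd h (by linarith)
      · exact h
    have h3 : (y - (s - t)) * (y - (s + t)) = 0 := by
      linear_combination h2 + hs - ht
    rcases mul_eq_zero.mp h3 with h | h
    · left; linarith
    · right; linarith
end
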